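/- Let n ≥ 2 and p : Fin n → ℤ with ∑ i, p i = 0. If there exists a subset S ⊆ Fin n with S nonempty, S ≠ Fin n, and ∑ i ∈ S, p i = 0, then there exists a list L of transactions that settles p with L.length ≤ n − 2. -/

import Mathlib

/-!
Pick a hub `x ∈ S` and let every other member `i` of `S` settle its balance `p i` directly
with `x`: this takes at most `|S| - 1` transactions, and since `∑ i ∈ S, p i = 0` the hub
ends up with net flow exactly `p x`. Doing the same in `Sᶜ` (also nonempty and balanced)
settles `p` with at most `(|S| - 1) + (n - |S| - 1) = n - 2` transactions.
-/

/-- A transaction `(i, j, a)`: participant `i` pays amount `a` to participant `j`. -/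
abbrev Txn (m : ℕ) := Fin m × Fin m × ℤ

/-- All transactions in the list are valid: distinct sender/receiver, positive amount. -/
def ValidTxns {m : ℕ} (L : List (Txn m)) : Prop :=
  ∀ t ∈ L, t.1 ≠ t.2.1 ∧ 0 < t.2.2

/-- `L` settles the balance vector `p`: for every participant `k`, the total amount sent
by `k` minus the total amount received by `k` equals `p k`. -/
def Settles {m : ℕ} (L : List (Txn m)) (p : Fin m → ℤ) : Prop :=
  ∀ k : Fin m,
    ((L.filter (fun t => t.1 = k)).map (fun t => t.2.2)).sum
      - ((L.filter (fun t => t.2.1 = k)).map (fun t => t.2.2)).sum = p k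

open Finset

section Settlement

variable {m : ℕ}

def netFlow (L : List (Txn m)) (k : Fin m) : ℤ :=
  ((L.filter (fun t => t.1 = k)).map (fun t => t.2.2)).sum
    - ((L.filter (fun t => t.2.1 = k)).map (fun t => t.2.2)).sum

theorem settles_iff_netFlow_eq {L : List (Txn m)} {p : Fin m → ℤ} :
    Settles L p ↔ netFlow L = p :=
  funext_iff.symm

@[simp]
theorem netFlow_nil : netFlow ([] : List (Txn m)) = 0 := by
  funext k
  simp [netFlow]

theorem netFlow_singleton (i j : Fin m) (a : ℤ) :
    netFlow [(i, j, a)] = Pi.single i a - Pi.single j a := by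
  funext k
  by_cases hi : i = k <;> by_cases hj : j = k <;> simp [netFlow, hi, hj, eq_comm (a := k)]

theorem netFlow_append (L₁ L₂ : List (Txn m)) :
    netFlow (L₁ ++ L₂) = netFlow L₁ + netFlow L₂ := by
  funext k
  simp only [netFlow, List.filter_append, List.map_append, List.sum_append, Pi.add_apply]
  ring

theorem netFlow_flatMap {ι : Type*} (l : List ι) (f : ι → List (Txn m)) :
    netFlow (l.flatMap f) = (l.map fun i => netFlow (f i)).sum := by
  induction l with
  | nil => simp
  | cons i l ih => simp [List.flatMap_cons, netFlow_append, ih]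

theorem ValidTxns.append {L₁ L₂ : List (Txn m)} (h₁ : ValidTxns L₁) (h₂ : ValidTxns L₂) :
    ValidTxns (L₁ ++ L₂) := by
  intro t ht
  rcases List.mem_append.mp ht with ht | ht
  exacts [h₁ t ht, h₂ t ht]

theorem ValidTxns.flatMap {ι : Type*} {l : List ι} {f : ι → List (Txn m)}
    (h : ∀ i ∈ l, ValidTxns (f i)) : ValidTxns (l.flatMap f) := by
  intro t ht
  obtain ⟨i, hi, hti⟩ := List.mem_flatMap.mp ht
  exact h i hi t hti

def transfer (i j : Fin m) (a : ℤ) : List (Txn m) :=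
  if 0 < a then [(i, j, a)] else if a < 0 then [(j, i, -a)] else []

theorem validTxns_transfer {i j : Fin m} (hij : i ≠ j) (a : ℤ) : ValidTxns (transfer i j a) := by
  unfold transfer
  split_ifs with hpos hneg
  · simpa [ValidTxns] using ⟨hij, hpos⟩
  · simpa [ValidTxns] using ⟨hij.symm, hneg⟩
  · simp [ValidTxns]

theorem length_transfer_le (i j : Fin m) (a : ℤ) : (transfer i j a).length ≤ 1 := by
  unfold transfer
  split_ifs <;> simp

theorem netFlow_transfer (i j : Fin m) (a : ℤ) :
    netFlow (transfer i j a) = Pi.single i a - Pi.single j a := by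
  unfold transfer
  split_ifs with hpos hneg
  · exact netFlow_singleton i j a
  · rw [netFlow_singleton, Pi.single_neg, Pi.single_neg]
    abel
  · simp [show a = 0 by omega]

noncomputable def hubSettlement (x : Fin m) (S : Finset (Fin m)) (p : Fin m → ℤ) : List (Txn m) :=
  (S.erase x).toList.flatMap fun i => transfer i x (p i)

theorem validTxns_hubSettlement (x : Fin m) (S : Finset (Fin m)) (p : Fin m → ℤ) :
    ValidTxns (hubSettlement x S p) :=
  ValidTxns.flatMap fun _ hi =>
    validTxns_transfer (Finset.ne_of_mem_erase (Finset.mem_toList.mp hi)) _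

theorem length_hubSettlement_le {x : Fin m} {S : Finset (Fin m)} (hx : x ∈ S) (p : Fin m → ℤ) :
    (hubSettlement x S p).length ≤ #S - 1 := by
  rw [hubSettlement, List.length_flatMap, ← card_erase_of_mem hx, ← length_toList]
  refine (List.sum_le_card_nsmul _ 1 ?_).trans (by simp)
  intro l hl
  obtain ⟨i, -, rfl⟩ := List.mem_map.mp hl
  exact length_transfer_le i x (p i)

theorem netFlow_hubSettlement {x : Fin m} {S : Finset (Fin m)} {p : Fin m → ℤ} (hx : x ∈ S)
    (hS : ∑ i ∈ S, p i = 0) :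
    netFlow (hubSettlement x S p) = ∑ i ∈ S, Pi.single i (p i) := by
  have hhub : ∑ i ∈ S.erase x, (Pi.single x (p i) : Fin m → ℤ) = -Pi.single x (p x) := by
    have hrest : ∑ i ∈ S.erase x, p i = -p x := by
      rw [← sum_erase_add S p hx] at hS
      omega
    rw [← Pi.single_neg, ← hrest]
    exact (map_sum (AddMonoidHom.single (fun _ => ℤ) x) p _).symm
  rw [hubSettlement, netFlow_flatMap, sum_map_toList]
  simp only [netFlow_transfer, sum_sub_distrib]
  rw [hhub, sub_neg_eq_add, sum_erase_add S _ hx]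

end Settlement

theorem balanced_subset_gives_few_transactions_general (n : ℕ)
    (p : Fin n → ℤ) (hsum : ∑ i, p i = 0)
    (hS : ∃ S : Finset (Fin n), S.Nonempty ∧ S ≠ Finset.univ ∧ ∑ i ∈ S, p i = 0) :
    ∃ L : List (Txn n), ValidTxns L ∧ Settles L p ∧ L.length ≤ n - 2 := by
  obtain ⟨S, ⟨x, hx⟩, hproper, hS0⟩ := hS
  obtain ⟨y, hy⟩ : Sᶜ.Nonempty := by rwa [← compl_ne_univ_iff_nonempty, compl_compl]
  have hSc0 : ∑ i ∈ Sᶜ, p i = 0 := by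
    rw [← sum_add_sum_compl S p, hS0] at hsum
    simpa using hsum
  refine ⟨hubSettlement x S p ++ hubSettlement y Sᶜ p,
    (validTxns_hubSettlement x S p).append (validTxns_hubSettlement y Sᶜ p), ?_, ?_⟩
  · rw [settles_iff_netFlow_eq, netFlow_append, netFlow_hubSettlement hx hS0,
      netFlow_hubSettlement hy hSc0, sum_add_sum_compl, univ_sum_single]
  · have hcard : #S + #Sᶜ = n := by simp
    have hlenS := length_hubSettlement_le hx p
    have hlenSc := length_hubSettlement_le hy p
    have hSpos := card_pos.mpr ⟨x, hx⟩
    have hScpos := card_pos.mpr ⟨y, hy⟩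
    simp only [List.length_append]
    omega

/-- a nonempty proper balanced subset allows settling with at most
`n - 2` transactions (settle `S` and its complement independently). -/
theorem balanced_subset_gives_few_transactions (n : ℕ) (hn : 2 ≤ n)
    (p : Fin n → ℤ) (hsum : ∑ i, p i = 0)
    (hS : ∃ S : Finset (Fin n), S.Nonempty ∧ S ≠ Finset.univ ∧ ∑ i ∈ S, p i = 0) :
    ∃ L : List (Txn n), ValidTxns L ∧ Settles L p ∧ L.length ≤ n - 2 :=
  balanced_subset_gives_few_transactions_general n p hsum hS
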